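/- arXiv:1609.01402 — 3 statements merged into one kernel-verified Lean document; each statement's English description precedes it below -/
import Mathlib

section
/- Let G be a finite simple graph, let e be an edge of G, and let G' be the simple graph whose edge ideal is the polarization of the colon ideal (I(G)^2 : e). Then cochord(G') ≤ cochord(G). -/
/-!
Common definitions: edge ideals, Castelnuovo–Mumford regularity (via graded
free resolutions), chordal/co-chordal graphs, co-chordal cover number,
induced matchings, matchings, vertex covers, even-connections and the
polarized colon graph.
-/

open MvPolynomial

namespace RegPowers

/-- The edge ideal `I(G)` of a finite simple graph `G`, inside `k[x_v : v ∈ V]`: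
the ideal generated by the monomials `x_u * x_v` for edges `{u, v}` of `G`. -/
noncomputable def edgeIdeal (k : Type) [Field k] {V : Type} (G : SimpleGraph V) :
    Ideal (MvPolynomial V k) :=
  Ideal.span {m | ∃ u v : V, G.Adj u v ∧ m = X u * X v}

section Regularity

variable {k : Type} [Field k] {V : Type}

/-- A finite graded free resolution of a homogeneous ideal `I` of the polynomial
ring `k[x_v : v ∈ V]`:  free modules `F i = R^(rank i)` with generators of the
internal degrees `deg i`, an augmentation `F 0 → I` given by homogeneous
generators `gen` of `I`, and graded (degree preserving) differentials
`d i : F (i+1) → F i` given by matrices with homogeneous entries, forming an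
exact sequence `0 → F len → ⋯ → F 1 → F 0 → I → 0`. -/
structure GradedFreeResolution (I : Ideal (MvPolynomial V k)) where
  rank : ℕ → ℕ
  deg : (i : ℕ) → Fin (rank i) → ℕ
  len : ℕ
  rank_eq_zero : ∀ i : ℕ, len < i → rank i = 0
  gen : Fin (rank 0) → MvPolynomial V k
  gen_homog : ∀ l : Fin (rank 0), (gen l).IsHomogeneous (deg 0 l)
  gen_span : Ideal.span (Set.range gen) = I
  d : (i : ℕ) → Matrix (Fin (rank i)) (Fin (rank (i + 1))) (MvPolynomial V k)
  d_homog : ∀ (i : ℕ) (a : Fin (rank i)) (b : Fin (rank (i + 1))),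
    d i a b = 0 ∨ ∃ n : ℕ, (d i a b).IsHomogeneous n ∧ deg (i + 1) b = deg i a + n
  exact_zero :
    LinearMap.ker (Fintype.linearCombination (MvPolynomial V k) gen)
      = LinearMap.range (d 0).mulVecLin
  exact_succ : ∀ i : ℕ,
    LinearMap.ker (d i).mulVecLin = LinearMap.range (d (i + 1)).mulVecLin

/-- The Castelnuovo–Mumford regularity of a homogeneous ideal `I` in a polynomial
ring over a field: the least `r` such that `I` admits a (finite) graded free
resolution whose `i`-th free module is generated in degrees `≤ r + i`.
(The minimal graded free resolution realizes this minimum, so this agrees with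
the usual definition `reg I = max { j - i : Tor_i(I, k)_j ≠ 0 }`.) -/
noncomputable def reg (I : Ideal (MvPolynomial V k)) : ℕ :=
  sInf { r : ℕ | ∃ F : GradedFreeResolution I,
    ∀ (i : ℕ) (l : Fin (F.rank i)), F.deg i l ≤ r + i }

/-- A homogeneous ideal has a linear (minimal free) resolution iff it is generated
in a single degree `d` and its Castelnuovo–Mumford regularity equals `d`. -/
def HasLinearResolution (I : Ideal (MvPolynomial V k)) : Prop :=
  ∃ d : ℕ, (∃ S : Set (MvPolynomial V k),
      (∀ f ∈ S, f.IsHomogeneous d) ∧ Ideal.span S = I) ∧ reg I = d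

/-- A quadratic ideal has a linear presentation (i.e. its minimal free resolution
is 1-step linear): it is generated in degree 2 and admits a graded free resolution
whose zeroth free module is generated in degree `2` and whose first free module is
generated in degrees `≤ 3`. -/
def HasLinearPresentation (I : Ideal (MvPolynomial V k)) : Prop :=
  ∃ F : GradedFreeResolution I,
    (∀ l : Fin (F.rank 0), F.deg 0 l = 2) ∧ (∀ l : Fin (F.rank 1), F.deg 1 l ≤ 3)

end Regularity

section Graphs

variable {V : Type}

/-- A graph is chordal if every induced cycle in it has length 3, i.e. it has no
induced cycle of length `≥ 4`. -/
def IsChordal (G : SimpleGraph V) : Prop :=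
  ∀ n : ℕ, 4 ≤ n → IsEmpty (SimpleGraph.cycleGraph n ↪g G)

/-- The co-chordal cover number `cochord(G)`: the least `n` such that there are
`n` subgraphs `H 1, …, H n` of `G`, each with chordal complement, whose edge sets
cover the edge set of `G`. -/
noncomputable def cochord (G : SimpleGraph V) : ℕ :=
  sInf { n : ℕ | ∃ H : Fin n → SimpleGraph V,
    (∀ i, H i ≤ G ∧ IsChordal (H i)ᶜ) ∧ (⨆ i, H i) = G }

/-- The data `(u i, v i)`, `i < n`, is an induced matching of `G` of size `n`:
the edges `{u i, v i}` are edges of `G`, pairwise vertex disjoint, and the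
subgraph induced on their endpoints contains no other edges. -/
def IsInducedMatching (G : SimpleGraph V) {n : ℕ} (u v : Fin n → V) : Prop :=
  (∀ i, G.Adj (u i) (v i)) ∧
  ∀ i j, i ≠ j →
    (u i ≠ u j ∧ u i ≠ v j ∧ v i ≠ u j ∧ v i ≠ v j) ∧
    (¬ G.Adj (u i) (u j) ∧ ¬ G.Adj (u i) (v j) ∧
      ¬ G.Adj (v i) (u j) ∧ ¬ G.Adj (v i) (v j))

/-- The induced matching number `ν(G)`: the maximum size of an induced matching. -/
noncomputable def inducedMatchingNumber (G : SimpleGraph V) : ℕ :=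
  sSup { n : ℕ | ∃ u v : Fin n → V, IsInducedMatching G u v }

/-- `M` is a maximal matching of `G`: a set of pairwise disjoint edges of `G`
such that every edge of `G` meets an edge of `M`. -/
def IsMaximalMatching (G : SimpleGraph V) (M : Finset (Sym2 V)) : Prop :=
  (↑M ⊆ G.edgeSet) ∧
  ((M : Set (Sym2 V)).Pairwise fun e f => ∀ x : V, x ∈ e → x ∉ f) ∧
  ∀ e ∈ G.edgeSet, ∃ f ∈ M, ∃ x : V, x ∈ e ∧ x ∈ f

/-- The minimum matching number `β(G)`: the least cardinality of a maximal
matching of `G`. -/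
noncomputable def minMatchingNumber (G : SimpleGraph V) : ℕ :=
  sInf { n : ℕ | ∃ M : Finset (Sym2 V), IsMaximalMatching G M ∧ M.card = n }

/-- `(X, Y)` is a bipartition of `G`. -/
def IsBipartition (G : SimpleGraph V) (X Y : Finset V) : Prop :=
  Disjoint X Y ∧ (∀ v : V, v ∈ X ∨ v ∈ Y) ∧
    ∀ u v : V, G.Adj u v → (u ∈ X ∧ v ∈ Y) ∨ (u ∈ Y ∧ v ∈ X)

/-- `G` is bipartite. -/
def IsBipartite (G : SimpleGraph V) : Prop :=
  ∃ X Y : Finset V, IsBipartition G X Y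

/-- `C` is a vertex cover of `G`. -/
def IsVertexCover (G : SimpleGraph V) (C : Finset V) : Prop :=
  ∀ u v : V, G.Adj u v → u ∈ C ∨ v ∈ C

/-- `C` is a minimal vertex cover of `G`. -/
def IsMinimalVertexCover (G : SimpleGraph V) (C : Finset V) : Prop :=
  IsVertexCover G C ∧ ∀ C' ⊆ C, IsVertexCover G C' → C' = C

/-- `G` is unmixed (well-covered): all minimal vertex covers have the same size. -/
def IsUnmixed (G : SimpleGraph V) : Prop :=
  ∀ C C' : Finset V, IsMinimalVertexCover G C → IsMinimalVertexCover G C' →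
    C.card = C'.card

/-- `G` contains no induced path on `m` vertices. -/
def PathFree (m : ℕ) (G : SimpleGraph V) : Prop :=
  IsEmpty (SimpleGraph.pathGraph m ↪g G)

/-- `G` is weakly chordal: every induced cycle in `G` and in `Gᶜ` has length at
most 4. -/
def IsWeaklyChordal (G : SimpleGraph V) : Prop :=
  ∀ n : ℕ, 5 ≤ n →
    IsEmpty (SimpleGraph.cycleGraph n ↪g G) ∧ IsEmpty (SimpleGraph.cycleGraph n ↪g Gᶜ)

/-- `G` is `nK₂`-free: it has no induced matching of size `n`. -/
def NK2Free (n : ℕ) (G : SimpleGraph V) : Prop :=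
  ¬ ∃ u v : Fin n → V, IsInducedMatching G u v

/-- The whiskered graph `W(H)` of `H`: a pendant vertex is attached to every
vertex of `H` (the second copy of the vertex set consists of the pendant
vertices). -/
def whisker (H : SimpleGraph V) : SimpleGraph (V ⊕ V) :=
  SimpleGraph.fromRel fun a b =>
    match a, b with
    | Sum.inl u, Sum.inl v => H.Adj u v
    | Sum.inl u, Sum.inr v => u = v
    | _, _ => False

end Graphs

section EvenConnection

variable {V : Type} [DecidableEq V]

/-- `u` and `v` (possibly equal) are even-connected in `G` with respect to the
`s`-fold product `e 0 ⋯ e (s-1)` of edges of `G`: there is a walk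
`p 0, p 1, …, p (2m+1)` in `G` with `m ≥ 1` from `u` to `v` such that every
even-indexed edge `{p (2l+1), p (2l+2)}` is one of the `e i`, and each `e i` is
used at most as many times as it occurs in the list `e`. -/
def EvenConnected (G : SimpleGraph V) {s : ℕ} (e : Fin s → V × V) (u v : V) : Prop :=
  ∃ (m : ℕ) (p : ℕ → V), 1 ≤ m ∧ p 0 = u ∧ p (2 * m + 1) = v ∧
    (∀ r : ℕ, r < 2 * m + 1 → G.Adj (p r) (p (r + 1))) ∧
    (∀ l : ℕ, l < m → ∃ i : Fin s,
      Sym2.mk (p (2 * l + 1)) (p (2 * l + 2)) = Sym2.mk (e i).1 (e i).2) ∧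
    ∀ i : Fin s,
      ((Finset.range m).filter fun l =>
          Sym2.mk (p (2 * l + 1)) (p (2 * l + 2)) = Sym2.mk (e i).1 (e i).2).card ≤
        (Finset.univ.filter fun j : Fin s => Sym2.mk (e j).1 (e j).2 = Sym2.mk (e i).1 (e i).2).card

/-- The graph `G'` associated to the polarization of the colon ideal
`(I(G)^(s+1) : e 0 ⋯ e (s-1))` (by Banerjee's description of its quadratic
generators): its edges are the edges of `G`, the pairs `{u, v}` of distinct
vertices that are even-connected with respect to `e 0 ⋯ e (s-1)`, and, for every
vertex `u` even-connected to itself, an edge from `u` to the new vertex `u'`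
introduced by polarizing `x_u ^ 2`. -/
def polarGraph (G : SimpleGraph V) {s : ℕ} (e : Fin s → V × V) :
    SimpleGraph (V ⊕ V) :=
  SimpleGraph.fromRel fun a b =>
    match a, b with
    | Sum.inl u, Sum.inl v => G.Adj u v ∨ EvenConnected G e u v
    | Sum.inl u, Sum.inr v => u = v ∧ EvenConnected G e u u
    | _, _ => False

end EvenConnection

end RegPowers

/-!
Take an optimal co-chordal cover `H₁, …, Hₙ` of `G` with `e = ab` an edge of `Hⱼ`. For a single
edge, `u` and `v` are even-connected exactly when `u - a - b - v` or `u - b - a - v` is a walk,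
so `G'` is `G ⊔ E` on the old vertices, `E` joining the neighbours of `a` to those of `b`, with a
pendant edge at every common neighbour of `a` and `b`. Adding `E` and these pendant edges to `Hⱼ`
turns the cover of `G` into a cover of `G'` of the same size, and `Hⱼ` stays co-chordal: being
co-chordal, `Hⱼ` has no induced `2K₂` containing `ab`, so every edge of `Hⱼ ⊔ E` has an endpoint
adjacent to `a` or `b`, which rules out long induced cycles in the complement.
-/

namespace RegPowers

open SimpleGraph Sum
open Fin.CommRing

variable {V W : Type}

lemma isChordal_iff_forall_isEmpty (G : SimpleGraph V) :
    IsChordal G ↔ ∀ m, IsEmpty (cycleGraph (m + 4) ↪g G) := by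
  refine ⟨fun h m => h (m + 4) (by omega), fun h n hn => ?_⟩
  obtain ⟨m, rfl⟩ : ∃ m, n = m + 4 := ⟨n - 4, by omega⟩
  exact h m

section InducedCycle

variable {m : ℕ}

lemma cycleGraph_adj_add_one (x : Fin (m + 4)) : (cycleGraph (m + 4)).Adj x (x + 1) :=
  (cycleGraph_adj (n := m + 2)).mpr (Or.inr (by ring))

lemma ne_add_two_and_not_cycleGraph_adj (x : Fin (m + 4)) :
    x ≠ x + 2 ∧ ¬ (cycleGraph (m + 4)).Adj x (x + 2) := by
  have h1 : (1 : Fin (m + 4)) ≠ 0 := by simp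
  have h2 : (2 : Fin (m + 4)) ≠ 0 := by
    simp [Fin.ext_iff, Nat.mod_eq_of_lt (show 2 < m + 4 by omega)]
  have h3 : (3 : Fin (m + 4)) ≠ 0 := by
    simp [Fin.ext_iff, Nat.mod_eq_of_lt (show 3 < m + 4 by omega)]
  rw [cycleGraph_adj (n := m + 2)]
  refine ⟨fun h => h2 (by linear_combination -h), ?_⟩
  rintro (h | h)
  · exact h3 (by linear_combination -h)
  · exact h1 (by linear_combination h)

lemma exists_and_not_add_one {n : ℕ} [NeZero n] (P : Fin n → Prop) (h : ∃ x, P x)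
    (h' : ∃ x, ¬ P x) : ∃ x, P x ∧ ¬ P (x + 1) := by
  by_contra! hstep
  obtain ⟨x, hx⟩ := h
  obtain ⟨y, hy⟩ := h'
  have hall : ∀ k : ℕ, P (x + k) := by
    intro k
    induction k with
    | zero => simpa using hx
    | succ k ih => simpa [add_assoc] using hstep _ ih
  exact hy (by simpa using hall (y - x).val)

/-- The neighbours of a vertex carrying both labels work; otherwise take the vertices following
the last vertex of a run of `P` and of a run of `Q`. -/
lemma exists_ne_not_adj_not_or (P Q : Fin (m + 4) → Prop)
    (hPQ : ∀ x, P x → ¬ Q (x + 1)) (hQP : ∀ x, Q x → ¬ P (x + 1))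
    (hP : ∃ x, P x) (hQ : ∃ x, Q x) :
    ∃ x y, x ≠ y ∧ ¬ (cycleGraph (m + 4)).Adj x y ∧ ¬ (P x ∨ Q x) ∧ ¬ (P y ∨ Q y) := by
  by_cases hboth : ∃ x, P x ∧ Q x
  · obtain ⟨x, hPx, hQx⟩ := hboth
    have hx : x - 1 + 1 = x := sub_add_cancel x 1
    have hx' : x - 1 + 2 = x + 1 := by ring
    obtain ⟨hne, hnadj⟩ := ne_add_two_and_not_cycleGraph_adj (x - 1)
    refine ⟨x - 1, x - 1 + 2, hne, hnadj, ?_, ?_⟩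
    · rintro (h | h)
      · exact hPQ _ h (by rwa [hx])
      · exact hQP _ h (by rwa [hx])
    · rw [hx']
      rintro (h | h)
      · exact hQP x hQx h
      · exact hPQ x hPx h
  · push Not at hboth
    obtain ⟨x, hPx, hPx'⟩ := exists_and_not_add_one P hP (hQ.imp fun y hy h => hboth y h hy)
    obtain ⟨y, hQy, hQy'⟩ := exists_and_not_add_one Q hQ (hP.imp fun y hy => hboth y hy)
    refine ⟨x + 1, y + 1, fun h => hboth x hPx (add_right_cancel h ▸ hQy), ?_,
      not_or.mpr ⟨hPx', hPQ x hPx⟩, not_or.mpr ⟨hQP y hQy, hQy'⟩⟩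
    rw [cycleGraph_adj (n := m + 2)]
    rintro (h | h)
    · exact hQP y hQy ((by linear_combination -h : y + 1 = x) ▸ hPx)
    · exact hPQ x hPx ((by linear_combination -h : x + 1 = y) ▸ hQy)

variable {X : SimpleGraph W} (f : cycleGraph (m + 4) ↪g Xᶜ)

lemma not_adj_apply_add_one (x : Fin (m + 4)) : ¬ X.Adj (f x) (f (x + 1)) :=
  ((compl_adj _ _ _).mp (f.map_rel_iff.mpr (cycleGraph_adj_add_one x))).2

lemma adj_apply_of_not_adj {x y : Fin (m + 4)} (hne : x ≠ y)
    (h : ¬ (cycleGraph (m + 4)).Adj x y) : X.Adj (f x) (f y) := by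
  by_contra hX
  exact h (f.map_rel_iff.mp ((compl_adj _ _ _).mpr ⟨f.injective.ne hne, hX⟩))

lemma adj_apply_add_two (x : Fin (m + 4)) : X.Adj (f x) (f (x + 2)) :=
  adj_apply_of_not_adj f (ne_add_two_and_not_cycleGraph_adj x).1
    (ne_add_two_and_not_cycleGraph_adj x).2

end InducedCycle

/-- A graph with chordal complement has no induced `2K₂`: otherwise its complement would contain
the induced square `x a y b`. -/
lemma adj_or_adj_of_isChordal_compl {H : SimpleGraph V} (hc : IsChordal Hᶜ) {a b x y : V}
    (hab : H.Adj a b) (hxy : H.Adj x y) : H.Adj a x ∨ H.Adj a y ∨ H.Adj b x ∨ H.Adj b y := by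
  by_contra! h
  obtain ⟨hax, hay, hbx, hby⟩ := h
  have hxa : x ≠ a := by rintro rfl; exact hay hxy
  have hxb : x ≠ b := by rintro rfl; exact hby hxy
  have hya : y ≠ a := by rintro rfl; exact hax hxy.symm
  have hyb : y ≠ b := by rintro rfl; exact hbx hxy.symm
  have hxy' := hxy.ne
  have hab' := hab.ne
  refine (hc 4 le_rfl).false ⟨⟨![x, a, y, b], fun i j hij => ?_⟩, fun {i j} => ?_⟩
  · fin_cases i <;> fin_cases j <;> simp_all
  · change Hᶜ.Adj (![x, a, y, b] i) (![x, a, y, b] j) ↔ _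
    fin_cases i <;> fin_cases j <;>
      simp_all +decide [compl_adj, SimpleGraph.adj_comm, ne_comm]

section Cover

variable {G : SimpleGraph V}

lemma isChordal_compl_of_forall_adj_eq {X : SimpleGraph V} (v : V)
    (h : ∀ x y, X.Adj x y → x = v ∨ y = v) : IsChordal Xᶜ := by
  rw [isChordal_iff_forall_isEmpty]
  refine fun m => ⟨fun f => ?_⟩
  obtain ⟨p, hp⟩ : ∃ p, f p = v := by
    rcases h _ _ (adj_apply_add_two f 0) with h0 | h0 <;> exact ⟨_, h0⟩
  have hnext := cycleGraph_adj_add_one p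
  have hprev := cycleGraph_adj_add_one (p - 1)
  have hfar := adj_apply_add_two f (p - 1)
  rw [sub_add_cancel] at hprev
  rw [show p - 1 + 2 = p + 1 by ring] at hfar
  rcases h _ _ hfar with h' | h'
  · exact hprev.ne (f.injective (h'.trans hp.symm))
  · exact hnext.ne (f.injective (hp.trans h'.symm))

lemma exists_fin_cover {ι : Type} [Fintype ι] (H : ι → SimpleGraph V)
    (hH : ∀ i, H i ≤ G ∧ IsChordal (H i)ᶜ) (hsup : ⨆ i, H i = G) :
    ∃ H' : Fin (Fintype.card ι) → SimpleGraph V,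
      (∀ i, H' i ≤ G ∧ IsChordal (H' i)ᶜ) ∧ ⨆ i, H' i = G :=
  ⟨H ∘ (Fintype.equivFin ι).symm, fun _ => hH _, by
    rw [← hsup]
    exact (Fintype.equivFin ι).symm.iSup_comp⟩

lemma cochord_le_card {ι : Type} [Fintype ι] (H : ι → SimpleGraph V)
    (hH : ∀ i, H i ≤ G ∧ IsChordal (H i)ᶜ) (hsup : ⨆ i, H i = G) :
    cochord G ≤ Fintype.card ι :=
  Nat.sInf_le (exists_fin_cover H hH hsup)

/-- The stars of `G` cover it, so the infimum defining `cochord G` is attained. -/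
lemma exists_cochord_cover [Fintype V] (G : SimpleGraph V) :
    ∃ H : Fin (cochord G) → SimpleGraph V,
      (∀ i, H i ≤ G ∧ IsChordal (H i)ᶜ) ∧ ⨆ i, H i = G := by
  have hle : ∀ v, fromEdgeSet (G.incidenceSet v) ≤ G := fun v x y h => by
    simp_all [incidenceSet]
  have hstar : ∀ v x y, (fromEdgeSet (G.incidenceSet v)).Adj x y → x = v ∨ y = v := by
    simp_all [incidenceSet, eq_comm]
  have hsup : ⨆ v, fromEdgeSet (G.incidenceSet v) = G := by
    ext x y
    simpa [iSup_adj, incidenceSet] using fun h => h.ne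
  exact Nat.sInf_mem (s := {n | ∃ H : Fin n → SimpleGraph V,
      (∀ i, H i ≤ G ∧ IsChordal (H i)ᶜ) ∧ ⨆ i, H i = G}) ⟨_, exists_fin_cover _
    (fun v => ⟨hle v, isChordal_compl_of_forall_adj_eq v (hstar v)⟩) hsup⟩

end Cover

/-- The pairs joined by a walk `u - a - b - v`; for an edge `ab` these are exactly the pairs
even-connected with respect to `ab` (`evenConnected_single_iff`). -/
def evenGraph (G : SimpleGraph V) (a b : V) : SimpleGraph V :=
  SimpleGraph.fromRel fun u v => G.Adj a u ∧ G.Adj b v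

@[simp]
lemma evenGraph_adj {G : SimpleGraph V} {a b u v : V} :
    (evenGraph G a b).Adj u v ↔ u ≠ v ∧ (G.Adj a u ∧ G.Adj b v ∨ G.Adj a v ∧ G.Adj b u) :=
  fromRel_adj _ _ _

lemma evenConnected_single_of_adj [DecidableEq V] {G : SimpleGraph V} {a b u x y v : V}
    (hux : G.Adj u x) (hxy : G.Adj x y) (hyv : G.Adj y v) (he : s(x, y) = s(a, b)) :
    EvenConnected G (fun _ : Fin 1 => (a, b)) u v := by
  refine ⟨1, fun r => if r = 0 then u else if r = 1 then x else if r = 2 then y else v,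
    le_rfl, rfl, rfl, fun r hr => ?_, fun l hl => ⟨0, ?_⟩, fun i => ?_⟩
  · interval_cases r <;> simpa
  · obtain rfl : l = 0 := by omega
    simpa using he
  · calc _ ≤ (Finset.range 1).card := Finset.card_filter_le _ _
      _ = _ := by simp

lemma evenConnected_single_iff [DecidableEq V] {G : SimpleGraph V} {a b : V} (hab : G.Adj a b)
    (u v : V) : EvenConnected G (fun _ : Fin 1 => (a, b)) u v ↔
      G.Adj a u ∧ G.Adj b v ∨ G.Adj b u ∧ G.Adj a v := by
  constructor
  · rintro ⟨m, p, hm, rfl, rfl, hadj, hedge, hcount⟩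
    obtain rfl : m = 1 := by
      have hle := hcount 0
      rw [Finset.filter_true_of_mem fun l hl => ?_] at hle
      · simp at hle
        omega
      · obtain ⟨i, hi⟩ := hedge l (Finset.mem_range.mp hl)
        exact hi
    obtain ⟨i, hi⟩ := hedge 0 one_pos
    have h01 := hadj 0 (by norm_num)
    have h23 := hadj 2 (by norm_num)
    simp only [Nat.reduceMul, Nat.reduceAdd, zero_add] at hi h01 h23 ⊢
    rcases Sym2.eq_iff.mp hi with ⟨h1, h2⟩ | ⟨h1, h2⟩
    · exact Or.inl ⟨h1 ▸ h01.symm, h2 ▸ h23⟩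
    · exact Or.inr ⟨h1 ▸ h01.symm, h2 ▸ h23⟩
  · rintro (⟨hau, hbv⟩ | ⟨hbu, hav⟩)
    · exact evenConnected_single_of_adj hau.symm hab hbv rfl
    · exact evenConnected_single_of_adj hbu.symm hab.symm hav Sym2.eq_swap

def whiskerOn (L : SimpleGraph V) (S : Set V) : SimpleGraph (V ⊕ V) :=
  SimpleGraph.fromRel fun x y =>
    match x, y with
    | inl u, inl v => L.Adj u v
    | inl u, inr v => u = v ∧ u ∈ S
    | _, _ => False

section WhiskerOn

variable {L : SimpleGraph V} {S : Set V}

@[simp]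
lemma whiskerOn_adj_inl_inl {u v : V} : (whiskerOn L S).Adj (inl u) (inl v) ↔ L.Adj u v := by
  simp only [whiskerOn, fromRel_adj, ne_eq, inl.injEq]
  exact ⟨fun h => h.2.elim id fun h' => h'.symm, fun h => ⟨h.ne, Or.inl h⟩⟩

@[simp]
lemma whiskerOn_adj_inl_inr {u v : V} : (whiskerOn L S).Adj (inl u) (inr v) ↔ u = v ∧ u ∈ S := by
  simp [whiskerOn]

@[simp]
lemma whiskerOn_adj_inr_inl {u v : V} : (whiskerOn L S).Adj (inr u) (inl v) ↔ v = u ∧ v ∈ S := by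
  rw [adj_comm, whiskerOn_adj_inl_inr]

@[simp]
lemma whiskerOn_adj_inr_inr {u v : V} : ¬ (whiskerOn L S).Adj (inr u) (inr v) := by
  simp [whiskerOn]

lemma iSup_whiskerOn {ι : Type} (L : ι → SimpleGraph V) (S : ι → Set V) :
    ⨆ i, whiskerOn (L i) (S i) = whiskerOn (⨆ i, L i) (⋃ i, S i) := by
  ext x y
  rcases x with u | u <;> rcases y with v | v <;> simp [iSup_adj]

/-- In `Yᶜ` the vertex `w` is adjacent to everything but `v`, so an induced cycle through it is a
square `w x v y`. -/
lemma exists_adj_not_adj_of_cycle_compl {m : ℕ} {Y : SimpleGraph W}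
    (f : cycleGraph (m + 4) ↪g Yᶜ) {w v : W} (hw : ∀ z, Y.Adj w z → z = v) {k : Fin (m + 4)}
    (hk : f k = w) : Y.Adj w v ∧ ∃ x y, x ≠ v ∧ y ≠ v ∧ Y.Adj x y ∧ ¬ Y.Adj x v ∧ ¬ Y.Adj y v := by
  have hv : f (k + 2) = v := hw _ (hk ▸ adj_apply_add_two f k)
  have hv' : f (k - 2) = v := hw _ (hk ▸ by simpa using (adj_apply_add_two f (k - 2)).symm)
  have hxy := adj_apply_add_two f (k - 1)
  have hxv := not_adj_apply_add_one f (k + 1)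
  have hyv := not_adj_apply_add_one f (k - 2)
  rw [show k - 1 + 2 = k + 1 by ring] at hxy
  rw [show k + 1 + 1 = k + 2 by ring, hv] at hxv
  rw [show k - 2 + 1 = k - 1 by ring, hv', adj_comm] at hyv
  exact ⟨hv ▸ hk ▸ adj_apply_add_two f k, f (k + 1), f (k - 1), fun h => hyv (h ▸ hxy),
    fun h => hxv (h ▸ hxy.symm), hxy.symm, hxv, hyv⟩

lemma isChordal_compl_whiskerOn (hL : IsChordal Lᶜ)
    (hS : ∀ u ∈ S, ∀ x y, L.Adj x y → x ≠ u → y ≠ u → L.Adj u x ∨ L.Adj u y)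
    (hSS : ∀ u ∈ S, ∀ w ∈ S, u ≠ w → L.Adj u w) : IsChordal (whiskerOn L S)ᶜ := by
  rw [isChordal_iff_forall_isEmpty] at hL ⊢
  refine fun m => ⟨fun f => ?_⟩
  by_cases hinr : ∃ k u, f k = inr u
  · obtain ⟨k, u, hk⟩ := hinr
    have hw : ∀ z, (whiskerOn L S).Adj (inr u) z → z = inl u := by
      rintro (z | z) h <;> simp_all
    obtain ⟨huS, x, y, hxu, hyu, hxy, hxu', hyu'⟩ := exists_adj_not_adj_of_cycle_compl f hw hk
    rw [whiskerOn_adj_inr_inl] at huS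
    rcases x with x | x <;> rcases y with y | y <;>
      simp only [ne_eq, inl.injEq, whiskerOn_adj_inl_inl, whiskerOn_adj_inl_inr,
        whiskerOn_adj_inr_inl, whiskerOn_adj_inr_inr] at hxu hyu hxy hxu' hyu'
    · rcases hS u huS.2 x y hxy hxu hyu with h | h
      · exact hxu' h.symm
      · exact hyu' h.symm
    · exact hxu' (hSS u huS.2 x (hxy.1 ▸ hxy.2) (Ne.symm hxu)).symm
    · exact hyu' (hSS u huS.2 y (hxy.1 ▸ hxy.2) (Ne.symm hyu)).symm
  · push Not at hinr
    have hleft : ∀ k, ∃ u, f k = inl u := fun k => by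
      rcases h : f k with u | u
      · exact ⟨u, rfl⟩
      · exact absurd h (hinr k u)
    choose g hg using hleft
    have hginj : Function.Injective g := fun k l h => f.injective (by rw [hg, hg, h])
    refine (hL m).false ⟨⟨g, hginj⟩, fun {k l} => ?_⟩
    rw [← f.map_rel_iff, hg, hg]
    simp [compl_adj, hginj.eq_iff]

end WhiskerOn

section EvenGraph

variable {G H : SimpleGraph V} {a b : V}

lemma adj_or_adj_of_sup_evenGraph_adj (hHG : H ≤ G) (hc : IsChordal Hᶜ) (hab : H.Adj a b)
    {x y : V} (h : (H ⊔ evenGraph G a b).Adj x y) :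
    G.Adj a x ∨ G.Adj b x ∨ G.Adj a y ∨ G.Adj b y := by
  rw [sup_adj, evenGraph_adj] at h
  rcases h with h | ⟨-, ⟨hax, -⟩ | ⟨hay, -⟩⟩
  · rcases adj_or_adj_of_isChordal_compl hc hab h with h | h | h | h
    · exact Or.inl (hHG h)
    · exact Or.inr (Or.inr (Or.inl (hHG h)))
    · exact Or.inr (Or.inl (hHG h))
    · exact Or.inr (Or.inr (Or.inr (hHG h)))
  · exact Or.inl hax
  · exact Or.inr (Or.inr (Or.inl hay))

/-- On an induced cycle of `(H ⊔ evenGraph G a b)ᶜ` no vertex adjacent to `a` follows one adjacent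
to `b` or vice versa. If both kinds occur, two non-adjacent vertices of the cycle miss `a` and `b`,
so they span an edge of `H` that together with `ab` forms an induced `2K₂` of `H`; otherwise no
even-connection is available and the cycle is induced in `Hᶜ`. -/
lemma isChordal_compl_sup_evenGraph (hHG : H ≤ G) (hc : IsChordal Hᶜ) (hab : H.Adj a b) :
    IsChordal (H ⊔ evenGraph G a b)ᶜ := by
  rw [isChordal_iff_forall_isEmpty]
  refine fun m => ⟨fun f => ?_⟩
  have hstep : ∀ x, ¬ (G.Adj a (f x) ∧ G.Adj b (f (x + 1))) ∧
      ¬ (G.Adj b (f x) ∧ G.Adj a (f (x + 1))) := by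
    intro x
    have h := not_adj_apply_add_one f x
    have hne := f.injective.ne (cycleGraph_adj_add_one x).ne
    simp only [sup_adj, evenGraph_adj, ne_eq, hne, not_false_eq_true, true_and, not_or] at h
    exact ⟨h.2.1, fun h' => h.2.2 ⟨h'.2, h'.1⟩⟩
  by_cases hPQ : (∃ x, G.Adj a (f x)) ∧ ∃ x, G.Adj b (f x)
  · obtain ⟨x, y, hne, hnadj, hx, hy⟩ := exists_ne_not_adj_not_or _ _
      (fun x hP hQ => (hstep x).1 ⟨hP, hQ⟩) (fun x hQ hP => (hstep x).2 ⟨hQ, hP⟩) hPQ.1 hPQ.2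
    have := adj_or_adj_of_sup_evenGraph_adj hHG hc hab (adj_apply_of_not_adj f hne hnadj)
    tauto
  · have hE : ∀ x y, ¬ (evenGraph G a b).Adj (f x) (f y) := by
      intro x y h
      rw [evenGraph_adj] at h
      rcases h.2 with ⟨hx, hy⟩ | ⟨hy, hx⟩
      · exact hPQ ⟨⟨x, hx⟩, ⟨y, hy⟩⟩
      · exact hPQ ⟨⟨y, hy⟩, ⟨x, hx⟩⟩
    refine ((isChordal_iff_forall_isEmpty _).mp hc m).false ⟨f.toEmbedding, fun {x y} => ?_⟩
    rw [← f.map_rel_iff]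
    simp only [compl_adj, sup_adj, hE, or_false]
    rfl

lemma isChordal_compl_whiskerOn_sup_evenGraph (hHG : H ≤ G) (hc : IsChordal Hᶜ)
    (hab : H.Adj a b) :
    IsChordal (whiskerOn (H ⊔ evenGraph G a b) {u | G.Adj a u ∧ G.Adj b u})ᶜ := by
  refine isChordal_compl_whiskerOn (isChordal_compl_sup_evenGraph hHG hc hab) ?_ ?_
  · rintro u ⟨hau, hbu⟩ x y hxy hxu hyu
    have := adj_or_adj_of_sup_evenGraph_adj hHG hc hab hxy
    simp only [sup_adj, evenGraph_adj]
    tauto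
  · rintro u ⟨hau, hbu⟩ w ⟨haw, hbw⟩ huw
    exact Or.inr ⟨huw, Or.inl ⟨hau, hbw⟩⟩

lemma polarGraph_single_eq [DecidableEq V] (hab : G.Adj a b) :
    polarGraph G (fun _ : Fin 1 => (a, b)) =
      whiskerOn (G ⊔ evenGraph G a b) {u | G.Adj a u ∧ G.Adj b u} := by
  ext x y
  rcases x with u | u <;> rcases y with v | v <;>
    simp [polarGraph, evenConnected_single_iff hab]
  · have : G.Adj u v → u ≠ v := G.ne_of_adj
    rw [G.adj_comm v u]
    tauto
  all_goals tauto

end EvenGraph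

/-- Let `G` be a finite simple graph, `e` an edge of `G`, and `G'`
the simple graph whose edge ideal is the polarization of the colon ideal
`(I(G)^2 : e)` (described, via Banerjee's theorem, by even-connections with
respect to `e`).  Then `cochord(G') ≤ cochord(G)`. -/
theorem cochord_polarGraph_le {V : Type} [Fintype V] [DecidableEq V]
    (G : SimpleGraph V) (e : V × V) (he : G.Adj e.1 e.2)
    (G' : SimpleGraph (V ⊕ V)) (hG' : G' = polarGraph G (fun _ : Fin 1 => e)) :
    cochord G' ≤ cochord G := by
  obtain ⟨a, b⟩ := e
  obtain ⟨H, hH, hsup⟩ := exists_cochord_cover G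
  obtain ⟨j, hj⟩ : ∃ j, (H j).Adj a b := by rwa [← hsup, iSup_adj] at he
  let L i := H i ⊔ if i = j then evenGraph G a b else ⊥
  let S i : Set V := if i = j then {u | G.Adj a u ∧ G.Adj b u} else ∅
  have hL : ⨆ i, L i = G ⊔ evenGraph G a b := by simp [L, iSup_sup_eq, hsup, iSup_ite]
  have hS : ⋃ i, S i = {u | G.Adj a u ∧ G.Adj b u} := by
    ext u
    simp [S]
  rw [hG', polarGraph_single_eq he, ← hL, ← hS, ← iSup_whiskerOn]
  refine (cochord_le_card _ (fun i => ⟨le_iSup _ i, ?_⟩) rfl).trans_eq (Fintype.card_fin _)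
  by_cases hi : i = j
  · subst hi
    simpa [L, S] using isChordal_compl_whiskerOn_sup_evenGraph (hH i).1 (hH i).2 hj
  · simpa [L, S, hi] using isChordal_compl_whiskerOn (hH i).2 (by simp) (by simp)
end RegPowers
end

section
/- Let G be a bipartite graph and let e_1,…,e_s (s ≥ 1) be edges of G, not necessarily distinct. Let G' be the graph associated to the colon ideal (I(G)^{s+1} : e_1⋯e_s). Then cochord(G') ≤ cochord(G). -/
/-!
Common definitions: edge ideals, Castelnuovo–Mumford regularity (via graded
free resolutions), chordal/co-chordal graphs, co-chordal cover number,
induced matchings, matchings, vertex covers, even-connections and the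
polarized colon graph.
-/

open MvPolynomial

namespace RegPowers

/-!
Let `A, B` be the parts of `G`. Every generator of `I(G)^(s+1)` has degree `s + 1` in the variables
of `A` and in those of `B`, so `x_a x_b` lies in the colon ideal only if `a` and `b` lie in
different parts, say `a ∈ A`, `b ∈ B`; the same count forces some generator dividing
`x_a x_b e_1 ⋯ e_s` to contain an edge `x_c x_b`, whence `x_a e_1 ⋯ e_s ∈ x_c I(G)^s`. Conversely
such a `c ∈ N(b)` puts `x_a x_b` into the colon ideal. Thus `G'` arises from `G` by giving each
`a ∈ A` the union of the neighbourhoods `N(c)` over the `c` related to `a` in this way.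

A bipartite graph is co-chordal exactly when it is a chain graph, i.e. the neighbourhoods of the
vertices of `A` are totally ordered by inclusion; unions of members of a chain are again totally
ordered. Applying the construction to every member of an optimal co-chordal cover of `G` therefore
gives a co-chordal cover of `G'` of the same size.
-/

open SimpleGraph

section ChainGraph

variable {V : Type}

theorem isBipartiteWith_compl_iff {G : SimpleGraph V} {S : Set V} :
    G.IsBipartiteWith S Sᶜ ↔ ∀ ⦃a b⦄, G.Adj a b → (a ∈ S ↔ b ∉ S) := by
  refine ⟨fun h a b hab => ?_, fun h => ⟨disjoint_compl_right, fun a b hab => ?_⟩⟩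
  · have := h.mem_of_adj hab
    simp only [Set.mem_compl_iff] at this
    tauto
  · have := h hab
    simp only [Set.mem_compl_iff]
    tauto

/-- The second condition says that the neighbourhoods of the vertices of `X` are totally ordered
by inclusion. -/
def IsChainGraph (B : SimpleGraph V) (X : Set V) : Prop :=
  B.IsBipartiteWith X Xᶜ ∧
  ∀ ⦃u u' v v'⦄, u ∈ X → u' ∈ X → B.Adj u v → B.Adj u' v' → B.Adj u v' ∨ B.Adj u' v

theorem IsChainGraph.isChordal_compl {B : SimpleGraph V} {X : Set V} (hB : IsChainGraph B X) :
    IsChordal Bᶜ := by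
  intro n hn
  refine ⟨fun φ => ?_⟩
  have adj_of_not_adj : ∀ i j, i ≠ j → ¬ (cycleGraph n).Adj i j → B.Adj (φ i) (φ j) :=
    fun i j hij h => by_contra fun hB' => h (φ.map_adj_iff.mp ⟨φ.injective.ne hij, hB'⟩)
  have not_adj_of_adj : ∀ i j, (cycleGraph n).Adj i j → ¬ B.Adj (φ i) (φ j) :=
    fun i j h => (φ.map_adj_iff.mpr h).2
  have flip : ∀ i j, i ≠ j → ¬ (cycleGraph n).Adj i j → (φ i ∈ X ↔ φ j ∉ X) :=
    fun i j hij h => isBipartiteWith_compl_iff.1 hB.1 (adj_of_not_adj i j hij h)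
  obtain ⟨m, rfl⟩ : ∃ m, n = m + 4 := ⟨n - 4, by omega⟩
  rcases m with _ | m
  · -- opposite corners of the square are `B`-adjacent, so two consecutive corners lie in `X`
    have hC : ∀ i : Fin 4, (i ≠ i + 2 ∧ ¬ (cycleGraph 4).Adj i (i + 2)) ∧
        (i + 1 ≠ i + 3 ∧ ¬ (cycleGraph 4).Adj (i + 1) (i + 3)) ∧
        (cycleGraph 4).Adj i (i + 3) ∧ (cycleGraph 4).Adj (i + 1) (i + 2) := by
      decide
    obtain ⟨i, hi, hi'⟩ : ∃ i : Fin 4, φ i ∈ X ∧ φ (i + 1) ∈ X := by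
      have h02 := flip 0 2 (hC 0).1.1 (hC 0).1.2
      have h13 := flip 1 3 (hC 0).2.1.1 (hC 0).2.1.2
      by_cases h0 : φ 0 ∈ X <;> by_cases h1 : φ 1 ∈ X
      exacts [⟨0, h0, h1⟩, ⟨3, by tauto, h0⟩, ⟨1, h1, by tauto⟩, ⟨2, by tauto, by tauto⟩]
    rcases hB.2 hi hi' (adj_of_not_adj _ _ (hC i).1.1 (hC i).1.2)
        (adj_of_not_adj _ _ (hC i).2.1.1 (hC i).2.1.2) with h | h
    exacts [not_adj_of_adj _ _ (hC i).2.2.1 h, not_adj_of_adj _ _ (hC i).2.2.2 h]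
  · -- `0, 2, 4, 1, 3, 0` would be a closed walk of odd length in the bipartite graph `B`
    have hC : ((0 : Fin (m + 5)) ≠ 2 ∧ ¬ (cycleGraph (m + 5)).Adj 0 2) ∧
        ((2 : Fin (m + 5)) ≠ 4 ∧ ¬ (cycleGraph (m + 5)).Adj 2 4) ∧
        ((4 : Fin (m + 5)) ≠ 1 ∧ ¬ (cycleGraph (m + 5)).Adj 4 1) ∧
        ((1 : Fin (m + 5)) ≠ 3 ∧ ¬ (cycleGraph (m + 5)).Adj 1 3) ∧
        ((3 : Fin (m + 5)) ≠ 0 ∧ ¬ (cycleGraph (m + 5)).Adj 3 0) := by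
      simp (disch := omega) only [ne_eq, Fin.ext_iff, cycleGraph_adj', Fin.sub_def,
        Fin.coe_ofNat_eq_mod, Nat.mod_eq_of_lt, Nat.mod_eq_sub_mod]
      omega
    have := flip _ _ hC.1.1 hC.1.2
    have := flip _ _ hC.2.1.1 hC.2.1.2
    have := flip _ _ hC.2.2.1.1 hC.2.2.1.2
    have := flip _ _ hC.2.2.2.1.1 hC.2.2.2.1.2
    have := flip _ _ hC.2.2.2.2.1 hC.2.2.2.2.2
    tauto

theorem isChainGraph_of_isChordal_compl {B : SimpleGraph V} {X : Set V} (hB : IsChordal Bᶜ)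
    (hX : B.IsBipartiteWith X Xᶜ) : IsChainGraph B X := by
  refine ⟨hX, fun u u' v v' hu hu' huv hu'v' => ?_⟩
  by_contra! h
  obtain ⟨huv', hu'v⟩ := h
  have hX := isBipartiteWith_compl_iff.1 hX
  have hv : v ∉ X := (hX huv).1 hu
  have hv' : v' ∉ X := (hX hu'v').1 hu'
  have : u ≠ u' := by rintro rfl; exact huv' hu'v'
  have : v ≠ v' := by rintro rfl; exact hu'v hu'v'
  have : u ≠ v := huv.ne
  have : u' ≠ v' := hu'v'.ne
  have : u ≠ v' := by rintro rfl; exact hv' hu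
  have : u' ≠ v := by rintro rfl; exact hv hu'
  have : ¬ B.Adj u u' := fun h => (hX h).1 hu hu'
  have : ¬ B.Adj v v' := fun h => hv ((hX h).2 hv')
  -- `u, u', v, v'` is an induced square of `Bᶜ`
  refine (hB 4 le_rfl).false ⟨⟨![u, u', v, v'], fun i j hij => ?_⟩, fun {i j} => ?_⟩
  · fin_cases i <;> fin_cases j <;> simp_all [eq_comm]
  · change Bᶜ.Adj (![u, u', v, v'] i) (![u, u', v, v'] j) ↔ _
    fin_cases i <;> fin_cases j <;> simp +decide [compl_adj, adj_comm, *]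

theorem IsBipartition.isBipartiteWith {G : SimpleGraph V} {A B : Finset V}
    (h : IsBipartition G A B) : G.IsBipartiteWith (A : Set V) (A : Set V)ᶜ := by
  refine isBipartiteWith_compl_iff.2 fun a b hab => ?_
  rcases h.2.2 a b hab with ⟨ha, hb⟩ | ⟨ha, hb⟩
  · exact iff_of_true ha fun hb' => Finset.disjoint_right.1 h.1 hb hb'
  · exact iff_of_false (Finset.disjoint_right.1 h.1 ha) (not_not.2 hb)

theorem isChainGraph_fromEdgeSet_incidenceSet (G : SimpleGraph V) (x : V) :
    IsChainGraph (fromEdgeSet (G.incidenceSet x)) {x} := by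
  refine ⟨isBipartiteWith_compl_iff.2 fun a b h => ?_, fun u u' v v' hu hu' _ h => ?_⟩
  · simp only [fromEdgeSet_adj, incidenceSet, Set.mem_ofPred_eq, Sym2.mem_iff] at h
    grind
  · rw [Set.mem_singleton_iff] at hu hu'
    subst hu hu'
    exact Or.inl h

theorem iSup_fromEdgeSet_incidenceSet (G : SimpleGraph V) :
    ⨆ x, fromEdgeSet (G.incidenceSet x) = G := by
  ext a b
  simp only [iSup_adj, fromEdgeSet_adj, incidenceSet, Set.mem_ofPred_eq, mem_edgeSet]
  exact ⟨fun ⟨_, h, _⟩ => h.1, fun h => ⟨a, ⟨h, Sym2.mem_mk_left a b⟩, h.ne⟩⟩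

theorem exists_cochordal_cover [Finite V] (G : SimpleGraph V) :
    ∃ n, ∃ H : Fin n → SimpleGraph V, (∀ i, H i ≤ G ∧ IsChordal (H i)ᶜ) ∧ (⨆ i, H i) = G := by
  obtain ⟨n, ⟨f⟩⟩ := Finite.exists_equiv_fin V
  refine ⟨n, fun i => fromEdgeSet (G.incidenceSet (f.symm i)), fun i => ⟨?_, ?_⟩, ?_⟩
  · exact (fromEdgeSet_mono (G.incidenceSet_subset _)).trans (fromEdgeSet_edgeSet G).le
  · exact (isChainGraph_fromEdgeSet_incidenceSet G _).isChordal_compl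
  · exact (f.symm.iSup_comp (g := fun x => fromEdgeSet (G.incidenceSet x))).trans
      (iSup_fromEdgeSet_incidenceSet G)

theorem exists_cochordal_cover_card_eq_cochord [Finite V] (G : SimpleGraph V) :
    ∃ H : Fin (cochord G) → SimpleGraph V, (∀ i, H i ≤ G ∧ IsChordal (H i)ᶜ) ∧ (⨆ i, H i) = G :=
  Nat.sInf_mem (exists_cochordal_cover G)

def nbhdUnion (H : SimpleGraph V) (X : Set V) (R : V → V → Prop) : SimpleGraph V :=
  fromRel fun a b => a ∈ X ∧ b ∉ X ∧ ∃ c, R a c ∧ H.Adj c b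

variable {H H' : SimpleGraph V} {X : Set V} {R : V → V → Prop}

theorem nbhdUnion_adj_of_mem {a b : V} (ha : a ∈ X) :
    (nbhdUnion H X R).Adj a b ↔ b ∉ X ∧ ∃ c, R a c ∧ H.Adj c b := by
  simp only [nbhdUnion, fromRel_adj]
  constructor
  · rintro ⟨-, h | h⟩
    exacts [h.2, absurd ha h.2.1]
  · rintro h
    exact ⟨by rintro rfl; exact h.1 ha, Or.inl ⟨ha, h⟩⟩

theorem nbhdUnion_le_iff {G : SimpleGraph V} :
    nbhdUnion H X R ≤ G ↔ ∀ a b, a ∈ X → b ∉ X → (∃ c, R a c ∧ H.Adj c b) → G.Adj a b := by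
  refine ⟨fun h a b ha hb hc => h ((nbhdUnion_adj_of_mem ha).2 ⟨hb, hc⟩), fun h a b hab => ?_⟩
  obtain ⟨-, ⟨ha, hb, hc⟩ | ⟨hb, ha, hc⟩⟩ := hab
  exacts [h a b ha hb hc, (h b a hb ha hc).symm]

theorem nbhdUnion_mono (h : H ≤ H') : nbhdUnion H X R ≤ nbhdUnion H' X R :=
  nbhdUnion_le_iff.2 fun _ _ ha hb ⟨c, hc, hcb⟩ =>
    (nbhdUnion_adj_of_mem ha).2 ⟨hb, c, hc, h hcb⟩

theorem nbhdUnion_iSup {ι : Sort*} (H : ι → SimpleGraph V) :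
    nbhdUnion (⨆ i, H i) X R = ⨆ i, nbhdUnion (H i) X R := by
  refine le_antisymm (nbhdUnion_le_iff.2 fun a b ha hb ⟨c, hc, hcb⟩ => ?_)
    (iSup_le fun i => nbhdUnion_mono (le_iSup H i))
  obtain ⟨i, hi⟩ := iSup_adj.1 hcb
  exact iSup_adj.2 ⟨i, (nbhdUnion_adj_of_mem ha).2 ⟨hb, c, hc, hi⟩⟩

theorem IsChainGraph.nbhdUnion (hH : IsChainGraph H X) : IsChainGraph (nbhdUnion H X R) X := by
  refine ⟨isBipartiteWith_compl_iff.2 fun a b hab => ?_, fun u u' v v' hu hu' huv hu'v' => ?_⟩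
  · obtain ⟨-, ⟨ha, hb, -⟩ | ⟨hb, ha, -⟩⟩ := hab <;> tauto
  rw [nbhdUnion_adj_of_mem hu] at huv ⊢
  rw [nbhdUnion_adj_of_mem hu'] at hu'v' ⊢
  obtain ⟨hv, c, hc, hcv⟩ := huv
  obtain ⟨hv', c', hc', hc'v'⟩ := hu'v'
  have hcX : c ∈ X := by have := isBipartiteWith_compl_iff.1 hH.1 hcv; tauto
  have hc'X : c' ∈ X := by have := isBipartiteWith_compl_iff.1 hH.1 hc'v'; tauto
  rcases hH.2 hcX hc'X hcv hc'v' with h | h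
  exacts [Or.inl ⟨hv', c, hc, h⟩, Or.inr ⟨hv, c', hc', h⟩]

theorem cochord_nbhdUnion_le [Finite V] {G : SimpleGraph V} (hX : G.IsBipartiteWith X Xᶜ)
    (R : V → V → Prop) : cochord (nbhdUnion G X R) ≤ cochord G := by
  obtain ⟨H, hH, hsup⟩ := exists_cochordal_cover_card_eq_cochord G
  refine Nat.sInf_le ⟨fun i => nbhdUnion (H i) X R, fun i => ⟨nbhdUnion_mono (hH i).1, ?_⟩, ?_⟩
  · have hHX : (H i).IsBipartiteWith X Xᶜ := ⟨hX.disjoint, fun a b h => hX.mem_of_adj ((hH i).1 h)⟩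
    exact (isChainGraph_of_isChordal_compl (hH i).2 hHX).nbhdUnion.isChordal_compl
  · exact (nbhdUnion_iSup H).symm.trans (congrArg (nbhdUnion · X R) hsup)

end ChainGraph

section EdgeIdealPowers

variable {k : Type} [Field k] {V : Type}

noncomputable def edgeExp (p : V × V) : V →₀ ℕ := Finsupp.single p.1 1 + Finsupp.single p.2 1

theorem X_mul_X_eq_monomial (u v : V) :
    (X u * X v : MvPolynomial V k) = monomial (edgeExp (u, v)) 1 := by
  rw [X, X, monomial_mul, one_mul, edgeExp]

theorem prod_X_mul_X_eq_monomial {ι : Type*} [Fintype ι] (g : ι → V × V) :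
    ∏ i, (X (g i).1 * X (g i).2 : MvPolynomial V k) = monomial (∑ i, edgeExp (g i)) 1 := by
  simp only [X_mul_X_eq_monomial, monomial_sum_one]

theorem X_mul_X_mul_prod_eq_monomial (a b : V) {s : ℕ} (e : Fin s → V × V) :
    X a * X b * ∏ i, (X (e i).1 * X (e i).2 : MvPolynomial V k) =
      monomial (edgeExp (a, b) + ∑ i, edgeExp (e i)) 1 := by
  rw [prod_X_mul_X_eq_monomial, X_mul_X_eq_monomial, monomial_mul, one_mul]

theorem edgeIdeal_pow_eq_span (G : SimpleGraph V) (t : ℕ) :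
    edgeIdeal k G ^ t = Ideal.span ((monomial · (1 : k)) ''
      {d | ∃ g : Fin t → V × V, (∀ j, G.Adj (g j).1 (g j).2) ∧ ∑ j, edgeExp (g j) = d}) := by
  rw [edgeIdeal, Submodule.span_pow]
  congr 1
  ext m
  rw [Set.mem_pow]
  constructor
  · rintro ⟨f, rfl⟩
    choose u v huv hf using fun i => (f i).2
    refine ⟨_, ⟨fun i => (u i, v i), huv, rfl⟩, ?_⟩
    simp only [List.prod_ofFn, hf, ← prod_X_mul_X_eq_monomial]
  · rintro ⟨_, ⟨g, hg, rfl⟩, rfl⟩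
    refine ⟨fun j => ⟨_, (g j).1, (g j).2, hg j, rfl⟩, ?_⟩
    rw [List.prod_ofFn, prod_X_mul_X_eq_monomial]

theorem monomial_mem_edgeIdeal_pow_iff {G : SimpleGraph V} {t : ℕ} {d : V →₀ ℕ} :
    monomial d (1 : k) ∈ edgeIdeal k G ^ t ↔
      ∃ g : Fin t → V × V, (∀ j, G.Adj (g j).1 (g j).2) ∧ ∑ j, edgeExp (g j) ≤ d := by
  classical
  rw [edgeIdeal_pow_eq_span, mem_ideal_span_monomial_image, support_monomial, if_neg one_ne_zero]
  simp

theorem adj_of_X_mul_X_mem_edgeIdeal {G : SimpleGraph V} {u v : V} (huv : u ≠ v)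
    (h : X u * X v ∈ edgeIdeal k G) : G.Adj u v := by
  rw [← pow_one (edgeIdeal k G), X_mul_X_eq_monomial, monomial_mem_edgeIdeal_pow_iff] at h
  obtain ⟨g, hg, hle⟩ := h
  rw [Fin.sum_univ_one] at hle
  have hpq := hg 0
  generalize g 0 = p at hpq hle
  obtain ⟨p, q⟩ := p
  classical
  have h1 := hle p
  have h2 := hle q
  simp only [edgeExp, Finsupp.add_apply, Finsupp.single_apply] at h1 h2
  have hne : p ≠ q := hpq.ne
  split_ifs at h1 h2 <;> subst_vars <;>
    first | omega | exact hpq | exact hpq.symm | exact (hne rfl).elim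

end EdgeIdealPowers

section DegreeCount

variable {V : Type} {G : SimpleGraph V} {S : Set V}

theorem weight_mono {M : Type*} [AddCommMonoid M] [PartialOrder M] [CanonicallyOrderedAdd M]
    {w : V → M} {d d' : V →₀ ℕ} (h : d ≤ d') : d.weight w ≤ d'.weight w := by
  obtain ⟨c, rfl⟩ := exists_add_of_le h
  rw [map_add]
  exact le_self_add

theorem weight_indicator_sum_edgeExp (hS : G.IsBipartiteWith S Sᶜ) {t : ℕ}
    {g : Fin t → V × V} (hg : ∀ j, G.Adj (g j).1 (g j).2) :
    (∑ j, edgeExp (g j)).weight (S.indicator 1) = t := by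
  classical
  simp only [map_sum, edgeExp, map_add, Finsupp.weight_single, Set.indicator_apply, Pi.one_apply,
    smul_eq_mul, one_mul]
  have : ∀ j, ((if (g j).1 ∈ S then 1 else 0) + if (g j).2 ∈ S then 1 else 0) = 1 := fun j => by
    have := isBipartiteWith_compl_iff.1 hS (hg j)
    split_ifs <;> tauto
  simp [this]

theorem le_weight_of_sum_edgeExp_le (hS : G.IsBipartiteWith S Sᶜ) {s t : ℕ}
    {g : Fin t → V × V} (hg : ∀ j, G.Adj (g j).1 (g j).2)
    {e : Fin s → V × V} (he : ∀ i, G.Adj (e i).1 (e i).2) {d : V →₀ ℕ}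
    (hle : ∑ j, edgeExp (g j) ≤ d + ∑ i, edgeExp (e i)) : t ≤ d.weight (S.indicator 1) + s := by
  have := weight_mono (w := S.indicator (1 : V → ℕ)) hle
  rwa [map_add, weight_indicator_sum_edgeExp hS hg, weight_indicator_sum_edgeExp hS he] at this

theorem isBipartiteWith_compl_compl (hS : G.IsBipartiteWith S Sᶜ) : G.IsBipartiteWith Sᶜ Sᶜᶜ := by
  rwa [compl_compl, isBipartiteWith_comm]

end DegreeCount

section ColonGraph

variable {k : Type} [Field k] {V : Type} {G : SimpleGraph V} {S : Set V} {s : ℕ}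
  {e : Fin s → V × V}

theorem mem_iff_notMem_of_X_mul_X_mul_prod_mem (hS : G.IsBipartiteWith S Sᶜ)
    (he : ∀ i, G.Adj (e i).1 (e i).2) {a b : V}
    (h : X a * X b * ∏ i, (X (e i).1 * X (e i).2) ∈ edgeIdeal k G ^ (s + 1)) : a ∈ S ↔ b ∉ S := by
  classical
  rw [X_mul_X_mul_prod_eq_monomial, monomial_mem_edgeIdeal_pow_iff] at h
  obtain ⟨g, hg, hle⟩ := h
  have hS' := le_weight_of_sum_edgeExp_le hS hg he hle
  have hSc := le_weight_of_sum_edgeExp_le (isBipartiteWith_compl_compl hS) hg he hle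
  simp only [edgeExp, map_add, Finsupp.weight_single, Set.indicator_apply, Set.mem_compl_iff,
    Pi.one_apply, smul_eq_mul, one_mul] at hS' hSc
  split_ifs at hS' hSc <;> first | omega | tauto

theorem exists_endpoint_eq_of_sum_edgeExp_le (hS : G.IsBipartiteWith S Sᶜ)
    (he : ∀ i, G.Adj (e i).1 (e i).2) {g : Fin (s + 1) → V × V}
    (hg : ∀ j, G.Adj (g j).1 (g j).2) {a b : V} (ha : a ∈ S)
    (hle : ∑ j, edgeExp (g j) ≤ edgeExp (a, b) + ∑ i, edgeExp (e i)) :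
    ∃ j, (g j).1 = b ∨ (g j).2 = b := by
  classical
  by_contra! hgb
  have hle' : ∑ j, edgeExp (g j) ≤ Finsupp.single a 1 + ∑ i, edgeExp (e i) := fun v => by
    by_cases hv : v = b
    · subst hv
      simp [edgeExp, Finsupp.single_apply, hgb]
    · simpa [edgeExp, Finsupp.single_apply, Ne.symm hv, add_assoc] using hle v
  have := le_weight_of_sum_edgeExp_le (isBipartiteWith_compl_compl hS) hg he hle'
  rw [Finsupp.weight_single, Set.indicator_of_notMem (by simpa using ha), smul_zero] at this
  omega

theorem exists_adj_of_X_mul_X_mul_prod_mem (hS : G.IsBipartiteWith S Sᶜ)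
    (he : ∀ i, G.Adj (e i).1 (e i).2) {a b : V} (ha : a ∈ S)
    (h : X a * X b * ∏ i, (X (e i).1 * X (e i).2) ∈ edgeIdeal k G ^ (s + 1)) :
    ∃ c, X a * ∏ i, (X (e i).1 * X (e i).2) ∈ Ideal.span {X c} * edgeIdeal k G ^ s ∧
      G.Adj c b := by
  rw [X_mul_X_mul_prod_eq_monomial, monomial_mem_edgeIdeal_pow_iff] at h
  obtain ⟨g, hg, hle⟩ := h
  obtain ⟨j, hj⟩ := exists_endpoint_eq_of_sum_edgeExp_le hS he hg ha hle
  obtain ⟨c, hcb, hgj⟩ : ∃ c, G.Adj c b ∧ edgeExp (g j) = edgeExp (c, b) := by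
    rcases hj with h | h
    · exact ⟨(g j).2, h ▸ (hg j).symm, by rw [edgeExp, edgeExp, h, add_comm]⟩
    · exact ⟨(g j).1, h ▸ hg j, by rw [edgeExp, edgeExp, h]⟩
  rw [Fin.sum_univ_succAbove _ j, hgj] at hle
  set r := ∑ i, edgeExp (g (j.succAbove i))
  have hr : monomial r (1 : k) ∈ edgeIdeal k G ^ s :=
    monomial_mem_edgeIdeal_pow_iff.2 ⟨_, fun i => hg _, le_rfl⟩
  obtain ⟨t, ht⟩ : ∃ t, Finsupp.single a 1 + ∑ i, edgeExp (e i) = Finsupp.single c 1 + r + t := by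
    refine exists_add_of_le (le_of_add_le_add_right (a := Finsupp.single b 1) ?_)
    simpa only [edgeExp, add_right_comm _ (Finsupp.single b 1)] using hle
  refine ⟨c, Ideal.mem_span_singleton_mul.2 ⟨_, Ideal.mul_mem_right (monomial t 1) _ hr, ?_⟩, hcb⟩
  rw [prod_X_mul_X_eq_monomial, X, X, monomial_mul, monomial_mul, monomial_mul, ht]
  simp only [mul_one, add_assoc]

theorem adj_iff_of_edgeIdeal_eq_colon {G' : SimpleGraph V}
    (hG' : edgeIdeal k G' = Submodule.colon ((edgeIdeal k G) ^ (s + 1))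
      (Ideal.span {∏ i, (X (e i).1 * X (e i).2 : MvPolynomial V k)})) {a b : V} :
    G'.Adj a b ↔ a ≠ b ∧ X a * X b * ∏ i, (X (e i).1 * X (e i).2) ∈ edgeIdeal k G ^ (s + 1) := by
  rw [← Ideal.mem_colon_span_singleton, ← hG']
  exact ⟨fun h => ⟨h.ne, Ideal.subset_span ⟨a, b, h, rfl⟩⟩,
    fun h => adj_of_X_mul_X_mem_edgeIdeal h.1 h.2⟩

theorem eq_nbhdUnion_of_edgeIdeal_eq_colon {G' : SimpleGraph V} (hS : G.IsBipartiteWith S Sᶜ)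
    (he : ∀ i, G.Adj (e i).1 (e i).2)
    (hG' : edgeIdeal k G' = Submodule.colon ((edgeIdeal k G) ^ (s + 1))
      (Ideal.span {∏ i, (X (e i).1 * X (e i).2 : MvPolynomial V k)})) :
    G' = nbhdUnion G S fun a c =>
      X a * ∏ i, (X (e i).1 * X (e i).2) ∈ Ideal.span {X c} * edgeIdeal k G ^ s := by
  refine le_antisymm (fun a b hab => ?_) (nbhdUnion_le_iff.2 fun a b ha hb ⟨c, hc, hcb⟩ => ?_)
  · obtain ⟨-, hmem⟩ := (adj_iff_of_edgeIdeal_eq_colon hG').1 hab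
    have hside := mem_iff_notMem_of_X_mul_X_mul_prod_mem hS he hmem
    by_cases ha : a ∈ S
    · exact (nbhdUnion_adj_of_mem ha).2
        ⟨hside.1 ha, exists_adj_of_X_mul_X_mul_prod_mem hS he ha hmem⟩
    · have hb : b ∈ S := by tauto
      rw [mul_comm (X a)] at hmem
      exact ((nbhdUnion_adj_of_mem hb).2
        ⟨ha, exists_adj_of_X_mul_X_mul_prod_mem hS he hb hmem⟩).symm
  · obtain ⟨q, hq, hcq⟩ := Ideal.mem_span_singleton_mul.1 hc
    refine (adj_iff_of_edgeIdeal_eq_colon hG').2 ⟨by rintro rfl; exact hb ha, ?_⟩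
    rw [mul_right_comm, ← hcq, mul_right_comm, pow_succ']
    exact Ideal.mul_mem_mul (Ideal.subset_span ⟨c, b, hcb, rfl⟩) hq

end ColonGraph

theorem cochord_colon_le_general (k : Type) [Field k] {V : Type} [Fintype V]
    (G G' : SimpleGraph V) (hbip : IsBipartite G)
    (s : ℕ) (e : Fin s → V × V) (he : ∀ i, G.Adj (e i).1 (e i).2)
    (hG' : edgeIdeal k G' =
      Submodule.colon ((edgeIdeal k G) ^ (s + 1))
        (Ideal.span {∏ i, (X (e i).1 * X (e i).2 : MvPolynomial V k)})) :
    cochord G' ≤ cochord G := by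
  obtain ⟨A, B, hAB⟩ := hbip
  rw [eq_nbhdUnion_of_edgeIdeal_eq_colon hAB.isBipartiteWith he hG']
  exact cochord_nbhdUnion_le hAB.isBipartiteWith _

/-- Let `G` be a bipartite graph and `e 0, …, e (s-1)` (with
`s ≥ 1`) edges of `G`, not necessarily distinct.  Let `G'` be the graph
associated to the colon ideal `(I(G)^(s+1) : e 0 ⋯ e (s-1))` (the simple graph,
on the same vertex set, whose edge ideal is this colon ideal).  Then
`cochord(G') ≤ cochord(G)`. -/
theorem cochord_colon_le (k : Type) [Field k] {V : Type} [Fintype V] [DecidableEq V]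
    (G G' : SimpleGraph V) (hbip : IsBipartite G)
    (s : ℕ) (hs : 1 ≤ s) (e : Fin s → V × V) (he : ∀ i, G.Adj (e i).1 (e i).2)
    (hG' : edgeIdeal k G' =
      Submodule.colon ((edgeIdeal k G) ^ (s + 1))
        (Ideal.span {∏ i, (X (e i).1 * X (e i).2 : MvPolynomial V k)})) :
    cochord G' ≤ cochord G :=
  cochord_colon_le_general k G G' hbip s e he hG'

end RegPowers
end

section
/- If G is an nK_2-free graph for some n ≥ 1, then for every s ≥ 1 and every s-fold product e_1⋯e_s of edges of G (not necessarily distinct), the graph G' associated to the polarization of the colon ideal (I(G)^{s+1} : e_1⋯e_s) is also nK_2-free. -/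
/-!
Common definitions: edge ideals, Castelnuovo–Mumford regularity (via graded
free resolutions), chordal/co-chordal graphs, co-chordal cover number,
induced matchings, matchings, vertex covers, even-connections and the
polarized colon graph.
-/

open MvPolynomial

/-!
Each edge of `G'` comes from a walk of odd length in `G` whose odd-indexed edges are among
`e 0, …, e (s-1)`, each used at most as often as it occurs (a plain edge of `G` being such a walk
of length one). Given an induced matching of `G'`, take the first edge of each of these walks.
If two of these first edges meet or are adjacent, the two walks can be cut and glued, reversing
them as needed to get an odd length, into another such walk between an end of one and an end
of the other; cutting the first walk before its first odd-indexed edge that the second one also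
uses keeps the multiplicities in check. That contradicts the matching being induced in `G'`,
so the first edges form an induced matching of `G`.
-/

theorem Multiset.add_le_of_disjoint {α : Type*} {s t u : Multiset α} (hs : s ≤ u) (ht : t ≤ u)
    (h : Disjoint s t) : s + t ≤ u := by
  classical
  rw [Multiset.add_eq_union_iff_disjoint.2 h]
  exact Multiset.union_le hs ht

theorem Multiset.count_sum_singleton {ι α : Type*} [DecidableEq α] (s : Finset ι) (f : ι → α)
    (a : α) : (∑ i ∈ s, {f i} : Multiset α).count a = (s.filter fun i => f i = a).card := by
  rw [Multiset.count_sum', Finset.card_filter]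
  simp only [Multiset.count_singleton, eq_comm]

namespace RegPowers

section LegalWalk

variable {V : Type} {G : SimpleGraph V} {E : Multiset (Sym2 V)}

def oddEdges (w : ℕ → V) (L : ℕ) : Multiset (Sym2 V) :=
  ∑ r ∈ Finset.range L, if Odd r then {s(w r, w (r + 1))} else 0

/-- The walk `w 0, …, w L`. For `E` the edges of `e 0 ⋯ e (s-1)` these are the walks of
even-connections, together with the single edges of `G` (`L = 1`). -/
structure IsLegalWalk (G : SimpleGraph V) (E : Multiset (Sym2 V)) (w : ℕ → V) (L : ℕ) : Prop where
  odd : Odd L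
  adj : ∀ r < L, G.Adj (w r) (w (r + 1))
  oddEdges_le : oddEdges w L ≤ E

def Linked (G : SimpleGraph V) (E : Multiset (Sym2 V)) (x y : V) : Prop :=
  ∃ w L, IsLegalWalk G E w L ∧ w 0 = x ∧ w L = y

theorem mem_oddEdges {w : ℕ → V} {L : ℕ} {x : Sym2 V} :
    x ∈ oddEdges w L ↔ ∃ r < L, Odd r ∧ s(w r, w (r + 1)) = x := by
  simp only [oddEdges, Multiset.mem_sum, Finset.mem_range]
  refine exists_congr fun r => and_congr_right fun _ => ?_
  split_ifs with h <;> simp [h, eq_comm]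

theorem oddEdges_mono (w : ℕ → V) {σ L : ℕ} (h : σ ≤ L) : oddEdges w σ ≤ oddEdges w L :=
  Finset.sum_le_sum_of_subset (Finset.range_subset_range.2 h)

theorem oddEdges_congr {w w' : ℕ → V} {L : ℕ} (h : ∀ t ≤ L, w t = w' t) :
    oddEdges w L = oddEdges w' L :=
  Finset.sum_congr rfl fun r hr => by
    rw [Finset.mem_range] at hr
    rw [h r hr.le, h (r + 1) hr]

theorem oddEdges_succ_of_even (w : ℕ → V) {a : ℕ} (ha : Even a) :
    oddEdges w (a + 1) = oddEdges w a := by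
  simp [oddEdges, Finset.sum_range_succ, Nat.not_odd_iff_even.2 ha]

def glue (A : ℕ → V) (a : ℕ) (B : ℕ → V) (b : ℕ) : ℕ → V :=
  fun t => if t ≤ a then A t else B (a + b - t)

section Glue

variable {A B : ℕ → V} {a b : ℕ}

theorem glue_zero : glue A a B b 0 = A 0 := if_pos (Nat.zero_le a)

theorem glue_of_le (hAB : A a = B b) {t : ℕ} (ht : a ≤ t) : glue A a B b t = B (a + b - t) := by
  unfold glue
  split_ifs with h
  · obtain rfl : t = a := le_antisymm h ht
    rw [hAB, Nat.add_sub_cancel_left]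
  · rfl

theorem glue_add (hAB : A a = B b) : glue A a B b (a + b) = B 0 := by
  rw [glue_of_le hAB (Nat.le_add_right a b), Nat.sub_self]

theorem adj_glue (hA : ∀ r < a, G.Adj (A r) (A (r + 1))) (hB : ∀ r < b, G.Adj (B r) (B (r + 1)))
    (hAB : A a = B b) : ∀ r < a + b, G.Adj (glue A a B b r) (glue A a B b (r + 1)) := by
  intro r hr
  rcases lt_or_ge r a with h | h
  · simp only [glue, if_pos h.le, if_pos (Nat.succ_le_of_lt h)]
    exact hA r h
  · rw [glue_of_le hAB h, glue_of_le hAB (by omega), show a + b - r = a + b - (r + 1) + 1 by omega]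
    exact (hB _ (by omega)).symm

theorem oddEdges_glue (hAB : A a = B b) (hodd : Odd (a + b)) :
    oddEdges (glue A a B b) (a + b) = oddEdges A a + oddEdges B b := by
  rw [oddEdges, Finset.sum_range_add]
  congr 1
  · exact oddEdges_congr fun t ht => if_pos ht
  · rw [oddEdges, ← Finset.sum_range_reflect (fun r => if Odd r then {s(B r, B (r + 1))} else 0)]
    refine Finset.sum_congr rfl fun k hk => ?_
    rw [Finset.mem_range] at hk
    have hpar : Odd (a + k) ↔ Odd (b - 1 - k) := by
      rw [Nat.odd_iff] at hodd ⊢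
      rw [Nat.odd_iff]
      omega
    rw [glue_of_le hAB (by omega), glue_of_le hAB (by omega),
      show a + b - (a + k) = b - 1 - k + 1 by omega,
      show a + b - (a + k + 1) = b - 1 - k by omega, Sym2.eq_swap]
    simp only [hpar]

theorem isLegalWalk_glue (hA : ∀ r < a, G.Adj (A r) (A (r + 1)))
    (hB : ∀ r < b, G.Adj (B r) (B (r + 1))) (hAB : A a = B b) (hodd : Odd (a + b))
    (hE : oddEdges A a + oddEdges B b ≤ E) : IsLegalWalk G E (glue A a B b) (a + b) :=
  ⟨hodd, adj_glue hA hB hAB, (oddEdges_glue hAB hodd).trans_le hE⟩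

end Glue

theorem glue_const_zero (w : ℕ → V) (L : ℕ) : glue (fun _ => w L) 0 w L = fun t => w (L - t) := by
  funext t
  unfold glue
  split_ifs with h
  · simp [Nat.le_zero.1 h]
  · rw [Nat.zero_add]

theorem oddEdges_reverse {w : ℕ → V} {L : ℕ} (hL : Odd L) :
    oddEdges (fun t => w (L - t)) L = oddEdges w L := by
  have h := oddEdges_glue (A := fun _ => w L) (a := 0) (B := w) (b := L) rfl (by rwa [zero_add])
  rwa [glue_const_zero, zero_add, show oddEdges (fun _ => w L) 0 = 0 from Finset.sum_range_zero _,
    zero_add] at h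

theorem IsLegalWalk.reverse {w : ℕ → V} {L : ℕ} (h : IsLegalWalk G E w L) :
    IsLegalWalk G E (fun t => w (L - t)) L where
  odd := h.odd
  adj r hr := by
    rw [show L - r = L - (r + 1) + 1 by omega]
    exact (h.adj _ (by omega)).symm
  oddEdges_le := (oddEdges_reverse h.odd).trans_le h.oddEdges_le

theorem IsLegalWalk.exists_reorient {w : ℕ → V} {L r : ℕ} (h : IsLegalWalk G E w L) (hr : r ≤ L)
    (P : Prop) : ∃ w' r', IsLegalWalk G E w' L ∧ oddEdges w' L = oddEdges w L ∧
      w' 0 ∈ ({w 0, w L} : Set V) ∧ r' ≤ L ∧ w' r' = w r ∧ (Even r' ↔ P) := by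
  by_cases hP : Even r ↔ P
  · exact ⟨w, r, h, rfl, Or.inl rfl, hr, rfl, hP⟩
  · have hflip : Even (L - r) ↔ ¬ Even r := by
      rw [Nat.even_sub hr, iff_false_left (Nat.not_even_iff_odd.2 h.odd)]
    refine ⟨_, L - r, h.reverse, oddEdges_reverse h.odd, Or.inr rfl, Nat.sub_le L r,
      by rw [Nat.sub_sub_self hr], by tauto⟩

theorem oddEdges_two_mul_add_one (p : ℕ → V) (m : ℕ) :
    oddEdges p (2 * m + 1) = ∑ l ∈ Finset.range m, {s(p (2 * l + 1), p (2 * l + 2))} := by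
  induction m with
  | zero => simp [oddEdges]
  | succ m ih =>
    rw [show 2 * (m + 1) + 1 = 2 * m + 1 + 1 + 1 by ring, oddEdges, Finset.sum_range_succ,
      Finset.sum_range_succ, ← oddEdges, ih, Finset.sum_range_succ]
    simp [Nat.odd_iff, show (2 * m + 1 + 1) % 2 = 0 by omega]

section Junction

variable {A B : ℕ → V} {LA LB : ℕ}

theorem exists_linked_of_eq (hA : IsLegalWalk G E A LA) (hB : IsLegalWalk G E B LB) {a b : ℕ}
    (ha : a ≤ LA) (hb : b ≤ LB) (hAB : A a = B b)
    (hdisj : Disjoint (oddEdges A a) (oddEdges B LB)) :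
    ∃ y ∈ ({B 0, B LB} : Set V), Linked G E (A 0) y := by
  obtain ⟨B', b', hB', hB'E, hB'0, hb', hB'b, hpar⟩ := hB.exists_reorient hb (¬ Even a)
  have hodd : Odd (a + b') := by
    rw [Nat.odd_add, ← Nat.not_even_iff_odd]
    tauto
  have hE : oddEdges A a + oddEdges B' b' ≤ E := by
    rw [← hB'E] at hdisj
    exact Multiset.add_le_of_disjoint ((oddEdges_mono A ha).trans hA.oddEdges_le)
      ((oddEdges_mono B' hb').trans hB'.oddEdges_le) (hdisj.mono_right (oddEdges_mono B' hb'))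
  have hAB' : A a = B' b' := hAB.trans hB'b.symm
  exact ⟨B' 0, hB'0, _, _, isLegalWalk_glue (fun r hr => hA.adj r (by omega))
    (fun r hr => hB'.adj r (by omega)) hAB' hodd hE, glue_zero, glue_add hAB'⟩

theorem exists_linked_of_adj (hA : IsLegalWalk G E A LA) (hB : IsLegalWalk G E B LB) {a b : ℕ}
    (ha : a ≤ LA) (hb : b ≤ LB) (hAB : G.Adj (A a) (B b))
    (hdisj : Disjoint (oddEdges A LA) (oddEdges B LB)) :
    ∃ x ∈ ({A 0, A LA} : Set V), ∃ y ∈ ({B 0, B LB} : Set V), Linked G E x y := by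
  obtain ⟨A', a', hA', hA'E, hA'0, ha', hA'a, hpa⟩ := hA.exists_reorient ha True
  obtain ⟨B', b', hB', hB'E, hB'0, hb', hB'b, hpb⟩ := hB.exists_reorient hb True
  rw [← hA'E, ← hB'E] at hdisj
  -- the edge `{A' a', B' b'}` sits at the even position `a'` of the glued walk
  set A'' : ℕ → V := fun t => if t ≤ a' then A' t else B' b'
  have hA''E : oddEdges A'' (a' + 1) = oddEdges A' a' := by
    rw [oddEdges_succ_of_even _ (hpa.2 trivial)]
    exact oddEdges_congr fun t ht => if_pos ht
  have hA''adj : ∀ r < a' + 1, G.Adj (A'' r) (A'' (r + 1)) := by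
    intro r hr
    rcases Nat.lt_succ_iff_lt_or_eq.1 hr with hr | rfl
    · simp only [A'', if_pos hr.le, if_pos (Nat.succ_le_of_lt hr)]
      exact hA'.adj r (by omega)
    · simp only [A'', le_refl, if_pos, Nat.not_succ_le_self, if_false, hA'a, hB'b]
      exact hAB
  have hodd : Odd (a' + 1 + b') := (Even.add_one (hpa.2 trivial)).add_even (hpb.2 trivial)
  have hE : oddEdges A'' (a' + 1) + oddEdges B' b' ≤ E := by
    rw [hA''E]
    exact Multiset.add_le_of_disjoint ((oddEdges_mono A' ha').trans hA'.oddEdges_le)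
      ((oddEdges_mono B' hb').trans hB'.oddEdges_le)
      ((hdisj.mono_left (oddEdges_mono A' ha')).mono_right (oddEdges_mono B' hb'))
  refine ⟨A' 0, hA'0, B' 0, hB'0, _, _, isLegalWalk_glue hA''adj (fun r hr => hB'.adj r (by omega))
    (if_neg (Nat.not_succ_le_self a')) hodd hE, ?_, glue_add (if_neg (Nat.not_succ_le_self a'))⟩
  rw [glue_zero]
  exact if_pos (Nat.zero_le a')

theorem exists_linked_of_touch (hA : IsLegalWalk G E A LA) (hB : IsLegalWalk G E B LB)
    {a b : ℕ} (ha : a ≤ LA) (hb : b ≤ LB) (htouch : A a = B b ∨ G.Adj (A a) (B b)) :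
    ∃ x ∈ ({A 0, A LA} : Set V), ∃ y ∈ ({B 0, B LB} : Set V), Linked G E x y := by
  classical
  by_cases hshared : ∃ ρ, ρ < LA ∧ Odd ρ ∧ s(A ρ, A (ρ + 1)) ∈ oddEdges B LB
  · -- glue at the first odd edge of `A` that `B` also uses: no budget is then spent twice
    obtain ⟨hρ, -, hmem⟩ := Nat.find_spec hshared
    have hdisj : Disjoint (oddEdges A (Nat.find hshared)) (oddEdges B LB) := by
      refine Multiset.disjoint_left.2 fun hx hxB => ?_
      obtain ⟨r, hr, hodd, rfl⟩ := mem_oddEdges.1 hx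
      exact Nat.find_min hshared hr ⟨hr.trans hρ, hodd, hxB⟩
    obtain ⟨r, hr, -, hrA⟩ := mem_oddEdges.1 hmem
    obtain ⟨b', hb', hAB⟩ : ∃ b' ≤ LB, A (Nat.find hshared) = B b' := by
      rcases Sym2.eq_iff.1 hrA with ⟨h, -⟩ | ⟨-, h⟩
      exacts [⟨r, hr.le, h.symm⟩, ⟨r + 1, hr, h.symm⟩]
    obtain ⟨y, hy, hlink⟩ := exists_linked_of_eq hA hB hρ.le hb' hAB hdisj
    exact ⟨A 0, Or.inl rfl, y, hy, hlink⟩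
  · have hdisj : Disjoint (oddEdges A LA) (oddEdges B LB) := by
      refine Multiset.disjoint_left.2 fun hx hxB => ?_
      obtain ⟨r, hr, hodd, rfl⟩ := mem_oddEdges.1 hx
      exact hshared ⟨r, hr, hodd, hxB⟩
    rcases htouch with hAB | hAB
    · obtain ⟨y, hy, hlink⟩ :=
        exists_linked_of_eq hA hB ha hb hAB (hdisj.mono_left (oddEdges_mono A ha))
      exact ⟨A 0, Or.inl rfl, y, hy, hlink⟩
    · exact exists_linked_of_adj hA hB ha hb hAB hdisj

end Junction

end LegalWalk

section PolarGraph

variable {V : Type} [DecidableEq V] {G : SimpleGraph V} {s : ℕ} {e : Fin s → V × V}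

def edgeMultiset (e : Fin s → V × V) : Multiset (Sym2 V) :=
  ∑ i, {s((e i).1, (e i).2)}

theorem oddEdges_le_edgeMultiset_iff (p : ℕ → V) (m : ℕ) :
    oddEdges p (2 * m + 1) ≤ edgeMultiset e ↔
      (∀ l < m, ∃ i, s(p (2 * l + 1), p (2 * l + 2)) = s((e i).1, (e i).2)) ∧
      ∀ i, ((Finset.range m).filter fun l =>
          s(p (2 * l + 1), p (2 * l + 2)) = s((e i).1, (e i).2)).card ≤
        (Finset.univ.filter fun j => s((e j).1, (e j).2) = s((e i).1, (e i).2)).card := by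
  simp only [oddEdges_two_mul_add_one, Multiset.le_iff_count, edgeMultiset,
    Multiset.count_sum_singleton]
  constructor
  · intro h
    refine ⟨fun l hl => ?_, fun i => h _⟩
    have hpos : 0 < ((Finset.range m).filter fun k =>
        s(p (2 * k + 1), p (2 * k + 2)) = s(p (2 * l + 1), p (2 * l + 2))).card :=
      Finset.card_pos.2 ⟨l, by simpa using hl⟩
    obtain ⟨i, hi⟩ := Finset.card_pos.1 (hpos.trans_le (h _))
    exact ⟨i, (Finset.mem_filter.1 hi).2.symm⟩
  · rintro ⟨hmem, hcount⟩ c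
    by_cases hc : ∃ i, s((e i).1, (e i).2) = c
    · obtain ⟨i, rfl⟩ := hc
      exact hcount i
    · refine (Finset.card_eq_zero.2 (Finset.filter_eq_empty_iff.2 fun l hl hlc => ?_)).trans_le
        (Nat.zero_le _)
      obtain ⟨i, hi⟩ := hmem l (Finset.mem_range.1 hl)
      exact hc ⟨i, hi.symm.trans hlc⟩

theorem adj_or_evenConnected_iff_linked {u v : V} :
    G.Adj u v ∨ EvenConnected G e u v ↔ Linked G (edgeMultiset e) u v := by
  constructor
  · rintro (h | ⟨m, p, -, rfl, rfl, hadj, hmem, hcount⟩)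
    · refine ⟨fun t => if t = 0 then u else v, 1, ⟨odd_one, fun r hr => ?_, ?_⟩, rfl, rfl⟩
      · simpa [Nat.lt_one_iff.1 hr] using h
      · simp [oddEdges]
    · exact ⟨p, 2 * m + 1, ⟨⟨m, rfl⟩, hadj, (oddEdges_le_edgeMultiset_iff p m).2 ⟨hmem, hcount⟩⟩,
        rfl, rfl⟩
  · rintro ⟨w, _, ⟨⟨m, rfl⟩, hadj, hE⟩, rfl, rfl⟩
    rcases Nat.eq_zero_or_pos m with rfl | hm
    · exact Or.inl (hadj 0 Nat.one_pos)
    · exact Or.inr ⟨m, w, hm, rfl, rfl, hadj, (oddEdges_le_edgeMultiset_iff w m).1 hE⟩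

theorem polarGraph_adj_of_linked {a b : V} (hab : a ≠ b) (h : Linked G (edgeMultiset e) a b) :
    (polarGraph G e).Adj (Sum.inl a) (Sum.inl b) := by
  rw [polarGraph, SimpleGraph.fromRel_adj]
  exact ⟨by simpa using hab, Or.inl (adj_or_evenConnected_iff_linked.2 h)⟩

theorem exists_isLegalWalk_of_polarGraph_adj {x y : V ⊕ V} (h : (polarGraph G e).Adj x y) :
    ∃ w L, IsLegalWalk G (edgeMultiset e) w L ∧
      Sum.inl (w 0) ∈ ({x, y} : Set (V ⊕ V)) ∧ Sum.inl (w L) ∈ ({x, y} : Set (V ⊕ V)) := by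
  rw [polarGraph, SimpleGraph.fromRel_adj] at h
  rcases x with p | p <;> rcases y with q | q
  · rcases h.2 with h | h <;> obtain ⟨w, L, hw, rfl, rfl⟩ := adj_or_evenConnected_iff_linked.1 h
    exacts [⟨w, L, hw, Or.inl rfl, Or.inr rfl⟩, ⟨w, L, hw, Or.inr rfl, Or.inl rfl⟩]
  · obtain ⟨w, L, hw, rfl, hL⟩ :=
      adj_or_evenConnected_iff_linked.1 (Or.inr (h.2.resolve_right id).2)
    exact ⟨w, L, hw, Or.inl rfl, Or.inl (congrArg Sum.inl hL)⟩
  · obtain ⟨w, L, hw, rfl, hL⟩ :=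
      adj_or_evenConnected_iff_linked.1 (Or.inr (h.2.resolve_left id).2)
    exact ⟨w, L, hw, Or.inr rfl, Or.inr (congrArg Sum.inl hL)⟩
  · exact (h.2.elim id id).elim

end PolarGraph

theorem isInducedMatching_iff {V : Type} {G : SimpleGraph V} {n : ℕ} {u v : Fin n → V} :
    IsInducedMatching G u v ↔ (∀ i, G.Adj (u i) (v i)) ∧ ∀ i j, i ≠ j →
      ∀ x ∈ ({u i, v i} : Set V), ∀ y ∈ ({u j, v j} : Set V), x ≠ y ∧ ¬ G.Adj x y := by
  simp only [IsInducedMatching, Set.mem_insert_iff, Set.mem_singleton_iff, forall_eq_or_imp,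
    forall_eq]
  grind

theorem nK2Free_polarGraph_general {V : Type} [DecidableEq V]
    (G : SimpleGraph V) (n : ℕ) (hfree : NK2Free n G)
    (s : ℕ) (e : Fin s → V × V)
    (G' : SimpleGraph (V ⊕ V)) (hG' : G' = polarGraph G e) :
    NK2Free n G' := by
  subst hG'
  rintro ⟨u, v, hM⟩
  rw [isInducedMatching_iff] at hM
  choose w L hw hw0 hwL using fun i => exists_isLegalWalk_of_polarGraph_adj (hM.1 i)
  have first_edge : ∀ i, ∀ x ∈ ({w i 0, w i 1} : Set V), ∃ r ≤ L i, w i r = x := by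
    rintro i x (rfl | rfl)
    exacts [⟨0, Nat.zero_le _, rfl⟩, ⟨1, (hw i).odd.pos, rfl⟩]
  have ends : ∀ i, ∀ a ∈ ({w i 0, w i (L i)} : Set V), Sum.inl a ∈ ({u i, v i} : Set (V ⊕ V)) := by
    rintro i a (rfl | rfl)
    exacts [hw0 i, hwL i]
  refine hfree ⟨fun i => w i 0, fun i => w i 1,
    isInducedMatching_iff.2 ⟨fun i => (hw i).adj 0 (hw i).odd.pos, fun i j hij x hx y hy => ?_⟩⟩
  obtain ⟨r, hr, rfl⟩ := first_edge i x hx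
  obtain ⟨r', hr', rfl⟩ := first_edge j y hy
  rw [← not_or]
  intro htouch
  obtain ⟨a, ha, b, hb, hab⟩ := exists_linked_of_touch (hw i) (hw j) hr hr' htouch
  obtain ⟨hne, hnadj⟩ := hM.2 i j hij _ (ends i a ha) _ (ends j b hb)
  exact hnadj (polarGraph_adj_of_linked (fun h => hne (congrArg Sum.inl h)) hab)

/-- If `G` is an `nK₂`-free graph for some `n ≥ 1`, then for
every `s ≥ 1` and every `s`-fold product `e 0 ⋯ e (s-1)` of edges of `G` (not
necessarily distinct), the graph `G'` associated to the polarization of the colon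
ideal `(I(G)^(s+1) : e 0 ⋯ e (s-1))` (described, via Banerjee's theorem, by
even-connections) is also `nK₂`-free. -/
theorem nK2Free_polarGraph {V : Type} [Fintype V] [DecidableEq V]
    (G : SimpleGraph V) (n : ℕ) (hn : 1 ≤ n) (hfree : NK2Free n G)
    (s : ℕ) (hs : 1 ≤ s) (e : Fin s → V × V) (he : ∀ i, G.Adj (e i).1 (e i).2)
    (G' : SimpleGraph (V ⊕ V)) (hG' : G' = polarGraph G e) :
    NK2Free n G' :=
  nK2Free_polarGraph_general G n hfree s e G' hG'

end RegPowers
end
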